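/- A skew brace $A$ is socle nilpotent (i.e., $\mathrm{Soc}_n(A)=A$ for some $n$) if and only if $A$ is right nilpotent (i.e., $A^{(m)}=1$ for some $m$) and the additive group $(A,\cdot)$ is nilpotent. -/

import Mathlib

namespace SB

class SkewBrace (A : Type*) extends Group A where
  circ : A → A → A
  sinv : A → A
  circ_assoc : ∀ a b c : A, circ (circ a b) c = circ a (circ b c)
  one_circ : ∀ a : A, circ 1 a = a
  circ_one : ∀ a : A, circ a 1 = a
  sinv_circ : ∀ a : A, circ (sinv a) a = 1
  circ_sinv : ∀ a : A, circ a (sinv a) = 1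
  brace : ∀ a b c : A, circ a (b * c) = circ a b * a⁻¹ * circ a c

open SkewBrace

variable {A : Type*} [SkewBrace A]

/-- The lambda map: `lam a b = a⁻¹ ⬝ (a ∘ b)`. -/
def lam (a b : A) : A := a⁻¹ * circ a b

/-- The star product: `star a b = a⁻¹ ⬝ (a ∘ b) ⬝ b⁻¹`. -/
def star (a b : A) : A := a⁻¹ * circ a b * b⁻¹

/-- For sets X, Y, the subgroup of (A, mul) generated by all star products x * y. -/
def starSub (X Y : Set A) : Subgroup A :=
  Subgroup.closure {z | ∃ x ∈ X, ∃ y ∈ Y, z = star x y}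

/-- The left series: `leftSeries n` is the term A^(n+1), so `leftSeries 0 = A`. -/
def leftSeries : ℕ → Subgroup A
  | 0 => ⊤
  | n + 1 => starSub (Set.univ) ((leftSeries n : Subgroup A) : Set A)

/-- The right series: `rightSeries n` is the term A^((n+1)), so `rightSeries 0 = A`. -/
def rightSeries : ℕ → Subgroup A
  | 0 => ⊤
  | n + 1 => starSub ((rightSeries n : Subgroup A) : Set A) (Set.univ)

/-- The commutator of x and a with respect to the circle operation. -/
def circCommutator (x a : A) : A := circ (circ (circ x a) (sinv x)) (sinv a)

/-- Internal description of the socle of the quotient by an ideal with underlying set S: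
elements x whose class lies in ker(lambda) and in the center of the additive group of the quotient. -/
def socStep (S : Set A) : Set A :=
  {x | ∀ a : A, star x a ∈ S ∧ x * a * x⁻¹ * a⁻¹ ∈ S}

/-- The socle series: Soc_0 = 1, Soc_(n+1)/Soc_n = Soc(A/Soc_n). -/
def socSeries : ℕ → Set A
  | 0 => {1}
  | n + 1 => socStep (socSeries n)

/-- Internal description of the annihilator of the quotient by an ideal with underlying set S. -/
def annStep (S : Set A) : Set A :=
  {x | ∀ a : A, star x a ∈ S ∧ x * a * x⁻¹ * a⁻¹ ∈ S ∧ circCommutator x a ∈ S}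

/-- The annihilator series: Ann_0 = 1, Ann_(n+1)/Ann_n = Ann(A/Ann_n). -/
def annSeries : ℕ → Set A
  | 0 => {1}
  | n + 1 => annStep (annSeries n)

lemma circ_eq_mul_lam (a b : A) : circ a b = a * lam a b := by
  unfold lam; group

lemma star_eq_lam (a b : A) : star a b = lam a b * b⁻¹ := by
  unfold star lam; group

lemma lam_mul (a b c : A) : lam a (b * c) = lam a b * lam a c := by
  unfold lam; rw [brace]; group

lemma lam_one_right (a : A) : lam a 1 = 1 := by
  unfold lam; rw [circ_one]; group

lemma lam_one_left (b : A) : lam 1 b = b := by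
  unfold lam; rw [one_circ]; group

lemma lam_inv (a b : A) : lam a b⁻¹ = (lam a b)⁻¹ := by
  have h := lam_mul a b b⁻¹
  rw [mul_inv_cancel, lam_one_right] at h
  exact (inv_eq_of_mul_eq_one_right h.symm).symm

lemma circ_inv (a b : A) : circ a b⁻¹ = a * (circ a b)⁻¹ * a := by
  have := lam_inv a b
  rw [circ_eq_mul_lam a b⁻¹, this, circ_eq_mul_lam a b]
  group

lemma lam_circ (a b c : A) : lam (circ a b) c = lam a (lam b c) := by
  unfold lam
  rw [brace, circ_assoc, circ_inv, circ_eq_mul_lam a b]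
  unfold lam; group

lemma lam_sinv_lam (a b : A) : lam (sinv a) (lam a b) = b := by
  rw [← lam_circ, sinv_circ, lam_one_left]

lemma lam_lam_sinv (a b : A) : lam a (lam (sinv a) b) = b := by
  rw [← lam_circ, circ_sinv, lam_one_left]

lemma lam_sinv_self (a : A) : lam a (sinv a) = a⁻¹ := by
  have h := circ_sinv a
  rw [circ_eq_mul_lam] at h
  exact eq_inv_of_mul_eq_one_right h

lemma star_one_left (a : A) : star (1:A) a = 1 := by
  rw [star_eq_lam, lam_one_left]; group

lemma star_mul_right (x a b : A) : star x (a * b) = star x a * a * star x b * a⁻¹ := by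
  rw [star_eq_lam, star_eq_lam, star_eq_lam, lam_mul]; group

lemma conj_star (x y a : A) : a * star x y * a⁻¹ = (star x a)⁻¹ * star x (a * y) := by
  rw [star_mul_right]; group

lemma star_circ_left (x y a : A) : star (circ x y) a = star x (star y a) * star y a * star x a := by
  have h : lam x (lam y a) = lam x (star y a) * lam x a := by
    rw [star_eq_lam y a, lam_mul, lam_inv]; group
  rw [star_eq_lam (circ x y), lam_circ, h, star_eq_lam x (star y a), star_eq_lam x a]
  group

lemma star_sinv_left (x a : A) : star (sinv x) a = (star x (lam (sinv x) a))⁻¹ := by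
  rw [star_eq_lam x, lam_lam_sinv, star_eq_lam (sinv x)]; group

lemma mul_eq_circ (x y : A) : x * y = circ x y * (y⁻¹ * (star x y)⁻¹ * y) := by
  rw [circ_eq_mul_lam, star_eq_lam]; group

lemma mul_eq_circ_lam (x y : A) : x * y = circ x (lam (sinv x) y) := by
  rw [circ_eq_mul_lam, lam_lam_sinv]

lemma star_sinv_inv (x : A) : star (sinv x) x⁻¹ = sinv x * x := by
  rw [star_eq_lam, ← lam_sinv_self x, lam_sinv_lam, lam_sinv_self]; group

def T1 (S : Set A) : Set A := {x | ∀ a : A, star x a ∈ S}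

lemma mem_T1 {S : Set A} {x : A} : x ∈ T1 S ↔ ∀ a : A, star x a ∈ S := Iff.rfl

structure Good (S : Set A) : Prop where
  one_mem : (1 : A) ∈ S
  mul_mem : ∀ {x y : A}, x ∈ S → y ∈ S → x * y ∈ S
  inv_mem : ∀ {x : A}, x ∈ S → x⁻¹ ∈ S
  conj_mem : ∀ {x : A}, x ∈ S → ∀ a : A, a * x * a⁻¹ ∈ S
  star_mem' : ∀ {x : A}, x ∈ S → ∀ a : A, star x a ∈ S

namespace Good

variable {S : Set A}

lemma T1_circ (hS : Good S) {x y : A} (hx : x ∈ T1 S) (hy : y ∈ T1 S) : circ x y ∈ T1 S := fun a => by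
  rw [star_circ_left]
  exact hS.mul_mem (hS.mul_mem (hx _) (hy _)) (hx _)

lemma T1_sinv (hS : Good S) {x : A} (hx : x ∈ T1 S) : sinv x ∈ T1 S := fun a => by
  rw [star_sinv_left]; exact hS.inv_mem (hx _)

lemma sub_T1 (hS : Good S) : S ⊆ T1 S := fun _ hs a => hS.star_mem' hs a

lemma T1_mul_right (hS : Good S) {x s : A} (hx : x ∈ T1 S) (hs : s ∈ S) : x * s ∈ T1 S := by
  rw [mul_eq_circ_lam]
  refine hS.T1_circ hx (hS.sub_T1 ?_)
  have h1 : star (sinv x) s ∈ S := hS.T1_sinv hx s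
  have h2 : lam (sinv x) s = star (sinv x) s * s := by rw [star_eq_lam]; group
  rw [h2]; exact hS.mul_mem h1 hs

lemma T1_mul (hS : Good S) {x y : A} (hx : x ∈ T1 S) (hy : y ∈ T1 S) : x * y ∈ T1 S := by
  rw [mul_eq_circ x y]
  refine hS.T1_mul_right (hS.T1_circ hx hy) ?_
  have h : y⁻¹ * (star x y)⁻¹ * y = y⁻¹ * (star x y)⁻¹ * (y⁻¹)⁻¹ := by group
  rw [h]; exact hS.conj_mem (hS.inv_mem (hx y)) y⁻¹

lemma T1_one (hS : Good S) : (1 : A) ∈ T1 S := fun a => by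
  rw [star_one_left]; exact hS.one_mem

lemma T1_inv (hS : Good S) {x : A} (hx : x ∈ T1 S) : x⁻¹ ∈ T1 S := by
  have hsx : sinv x ∈ T1 S := hS.T1_sinv hx
  have h1 : star (sinv x) x⁻¹ ∈ S := hsx x⁻¹
  rw [star_sinv_inv] at h1
  have h2 : x⁻¹ = sinv x * ((sinv x)⁻¹ * (sinv x * x)⁻¹ * ((sinv x)⁻¹)⁻¹) := by group
  rw [h2]
  exact hS.T1_mul_right hsx (hS.conj_mem (hS.inv_mem h1) (sinv x)⁻¹)

end Good

lemma mem_socStep {S : Set A} {x : A} :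
    x ∈ socStep S ↔ ∀ a : A, star x a ∈ S ∧ x * a * x⁻¹ * a⁻¹ ∈ S := Iff.rfl

lemma socStep_mono {S T : Set A} (h : S ⊆ T) : socStep S ⊆ socStep T := fun _ hx a =>
  ⟨h (hx a).1, h (hx a).2⟩

namespace Good

variable {S : Set A}

lemma sub_socStep (hS : Good S) : S ⊆ socStep S := fun s hs => by
  rw [mem_socStep]
  intro a
  refine ⟨hS.star_mem' hs a, ?_⟩
  have h : s * a * s⁻¹ * a⁻¹ = s * (a * s⁻¹ * a⁻¹) := by group
  rw [h]; exact hS.mul_mem hs (hS.conj_mem (hS.inv_mem hs) a)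

theorem socStep_good (hS : Good S) : Good (socStep S) where
  one_mem := hS.sub_socStep hS.one_mem
  mul_mem := by
    intro x y hx hy
    rw [mem_socStep] at hx hy ⊢
    intro a
    refine ⟨hS.T1_mul (fun b => (hx b).1) (fun b => (hy b).1) a, ?_⟩
    have h : x * y * a * (x * y)⁻¹ * a⁻¹ =
        x * (y * a * y⁻¹ * a⁻¹) * x⁻¹ * (x * a * x⁻¹ * a⁻¹) := by group
    rw [h]
    exact hS.mul_mem (hS.conj_mem (hy a).2 x) (hx a).2
  inv_mem := by
    intro x hx
    rw [mem_socStep] at hx ⊢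
    intro a
    refine ⟨hS.T1_inv (fun b => (hx b).1) a, ?_⟩
    have h : x⁻¹ * a * (x⁻¹)⁻¹ * a⁻¹ = x⁻¹ * (x * a * x⁻¹ * a⁻¹)⁻¹ * (x⁻¹)⁻¹ := by group
    rw [h]; exact hS.conj_mem (hS.inv_mem (hx a).2) x⁻¹
  conj_mem := by
    intro x hx a
    rw [mem_socStep] at hx ⊢
    intro b
    constructor
    · have hx1 : x ∈ T1 S := fun c => (hx c).1
      have hc : x⁻¹ * a * x * a⁻¹ ∈ S := by
        have h : x⁻¹ * a * x * a⁻¹ = x⁻¹ * (x * a * x⁻¹ * a⁻¹)⁻¹ * (x⁻¹)⁻¹ := by group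
        rw [h]; exact hS.conj_mem (hS.inv_mem (hx a).2) x⁻¹
      have h : a * x * a⁻¹ = x * (x⁻¹ * a * x * a⁻¹) := by group
      rw [h]
      exact hS.T1_mul_right hx1 hc b
    · have h : a * x * a⁻¹ * b * (a * x * a⁻¹)⁻¹ * b⁻¹ =
          a * (x * (a⁻¹ * b * a) * x⁻¹ * (a⁻¹ * b * a)⁻¹) * a⁻¹ := by group
      rw [h]; exact hS.conj_mem (hx (a⁻¹ * b * a)).2 a
  star_mem' := fun {x} hx a => hS.sub_socStep ((hx a).1)

/-- Bundle a good set as a subgroup. -/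
def toSubgroup (hS : Good S) : Subgroup A :=
  { carrier := S
    one_mem' := hS.one_mem
    mul_mem' := fun ha hb => hS.mul_mem ha hb
    inv_mem' := fun ha => hS.inv_mem ha }

lemma mem_toSubgroup (hS : Good S) {x : A} : x ∈ hS.toSubgroup ↔ x ∈ S := Iff.rfl

end Good

lemma good_socSeries : ∀ n : ℕ, Good (socSeries (A := A) n)
  | 0 => by
    constructor <;>
      (intros; simp_all only [socSeries, Set.mem_singleton_iff]) <;>
      simp [star_one_left]
  | n + 1 => (good_socSeries n).socStep_good

lemma socSeries_succ_sub (n : ℕ) : socSeries (A := A) n ⊆ socSeries (n + 1) := by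
  induction n with
  | zero => exact fun x hx => (good_socSeries 0).sub_socStep hx
  | succ n ih => exact socStep_mono ih

lemma socSeries_mono {m n : ℕ} (h : m ≤ n) : socSeries (A := A) m ⊆ socSeries n := by
  induction n with
  | zero => simp_all
  | succ n ih =>
    rcases Nat.lt_or_ge m (n+1) with h' | h'
    · exact (ih (Nat.lt_succ_iff.mp h')).trans (socSeries_succ_sub n)
    · have : m = n + 1 := le_antisymm h h'
      subst this; exact fun _ hx => hx

lemma one_mem_socSeries (n : ℕ) : (1 : A) ∈ socSeries (A := A) n :=
  (good_socSeries n).one_mem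

lemma star_mem_rightSeries_succ {i : ℕ} {x : A} (hx : x ∈ rightSeries (A := A) i) (a : A) :
    star x a ∈ rightSeries (A := A) (i + 1) := by
  show star x a ∈ starSub ((rightSeries (A := A) i : Subgroup A) : Set A) Set.univ
  exact Subgroup.subset_closure ⟨x, hx, a, trivial, rfl⟩

lemma conj_mem_rightSeries (i : ℕ) (a : A) :
    ∀ x ∈ rightSeries (A := A) i, a * x * a⁻¹ ∈ rightSeries (A := A) i := by
  cases i with
  | zero => exact fun x _ => Subgroup.mem_top _
  | succ n =>
    intro x hx
    show a * x * a⁻¹ ∈ starSub ((rightSeries (A := A) n : Subgroup A) : Set A) Set.univ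
    have hx' : x ∈ Subgroup.closure
        {z : A | ∃ u ∈ ((rightSeries (A := A) n : Subgroup A) : Set A),
          ∃ v ∈ (Set.univ : Set A), z = star u v} := hx
    clear hx
    induction hx' using Subgroup.closure_induction with
    | mem z hz =>
      obtain ⟨u, hu, v, -, rfl⟩ := hz
      rw [conj_star]
      exact mul_mem (inv_mem (Subgroup.subset_closure ⟨u, hu, a, trivial, rfl⟩))
        (Subgroup.subset_closure ⟨u, hu, a * v, trivial, rfl⟩)
    | one => simpa using one_mem _
    | mul p q hp hq hp' hq' =>
      have h : a * (p * q) * a⁻¹ = (a * p * a⁻¹) * (a * q * a⁻¹) := by group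
      rw [h]; exact mul_mem hp' hq'
    | inv p hp hp' =>
      have h : a * p⁻¹ * a⁻¹ = (a * p * a⁻¹)⁻¹ := by group
      rw [h]; exact inv_mem hp'

lemma socSeries_sub_ucs : ∀ k : ℕ, socSeries (A := A) k ⊆ ↑(Subgroup.upperCentralSeries A k)
  | 0 => by
    intro x hx
    simp only [socSeries, Set.mem_singleton_iff] at hx
    subst hx
    exact (Subgroup.upperCentralSeries A 0).one_mem
  | k + 1 => by
    intro x hx
    rw [SetLike.mem_coe, Subgroup.mem_upperCentralSeries_succ_iff]
    exact fun y => socSeries_sub_ucs k (hx y).2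

lemma key_step (i N : ℕ) (h : (rightSeries (A := A) (i + 1) : Set A) ⊆ socSeries N) :
    ∀ j : ℕ, ((rightSeries (A := A) i : Set A) ∩ ↑(Subgroup.upperCentralSeries A j)) ⊆
      socSeries (N + j) := by
  intro j
  induction j with
  | zero =>
    rintro x ⟨-, hx2⟩
    rw [SetLike.mem_coe, Subgroup.upperCentralSeries_zero, Subgroup.mem_bot] at hx2
    subst hx2
    exact one_mem_socSeries (N + 0)
  | succ j ih =>
    rintro x ⟨hx1, hx2⟩
    show x ∈ socStep (socSeries (N + j))
    rw [mem_socStep]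
    intro a
    constructor
    · exact socSeries_mono (Nat.le_add_right N j) (h (star_mem_rightSeries_succ hx1 a))
    · apply ih
      constructor
      · have heq : x * a * x⁻¹ * a⁻¹ = x * (a * x⁻¹ * a⁻¹) := by group
        rw [SetLike.mem_coe, heq]
        exact mul_mem hx1 (conj_mem_rightSeries i a x⁻¹ (inv_mem hx1))
      · exact mem_upperCentralSeries_succ_iff.mp hx2 a

/-- A skew brace is socle nilpotent iff it is right nilpotent and (A, mul) is nilpotent. -/
theorem socNilpotent_iff {A : Type*} [SkewBrace A] :
    (∃ n : ℕ, socSeries (A := A) n = Set.univ) ↔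
      (∃ m : ℕ, rightSeries (A := A) m = ⊥) ∧ Group.IsNilpotent A := by

  constructor
  · rintro ⟨n, hn⟩
    constructor
    · refine ⟨n, ?_⟩
      have main : ∀ k : ℕ, k ≤ n → (rightSeries (A := A) k : Set A) ⊆ socSeries (n - k) := by
        intro k
        induction k with
        | zero =>
          intro _
          rw [Nat.sub_zero, hn]
          exact Set.subset_univ _
        | succ k ih =>
          intro hk
          have hk' : k ≤ n := Nat.le_of_succ_le hk
          have hnk : n - k = (n - (k + 1)) + 1 := by omega
          have hgens : (rightSeries (A := A) (k+1) : Subgroup A) ≤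
              (good_socSeries (A := A) (n - (k + 1))).toSubgroup := by
            show starSub ((rightSeries (A := A) k : Subgroup A) : Set A) Set.univ ≤ _
            refine Subgroup.closure_le _ |>.mpr ?_
            rintro z ⟨u, hu, v, -, rfl⟩
            have hu' : u ∈ socSeries (A := A) (n - k) := ih hk' hu
            rw [hnk] at hu'
            exact (hu' v).1
          exact fun x hx => hgens hx
      have hsub := main n le_rfl
      rw [Nat.sub_self] at hsub
      ext x
      simp only [Subgroup.mem_bot]
      constructor
      · intro hx
        have := hsub hx
        simpa only [socSeries, Set.mem_singleton_iff] using this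
      · rintro rfl; exact one_mem _
    · refine ⟨⟨n, ?_⟩⟩
      rw [eq_top_iff]
      intro x _
      exact socSeries_sub_ucs n (hn ▸ Set.mem_univ x)
  · rintro ⟨⟨m, hm⟩, hnil⟩
    obtain ⟨c, hc⟩ := Group.IsNilpotent.nilpotent A
    have main : ∀ d : ℕ, ∃ N : ℕ, (rightSeries (A := A) (m - d) : Set A) ⊆ socSeries N := by
      intro d
      induction d with
      | zero =>
        refine ⟨0, ?_⟩
        rw [Nat.sub_zero, hm]
        intro x hx
        rw [SetLike.mem_coe, Subgroup.mem_bot] at hx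
        subst hx
        exact one_mem_socSeries 0
      | succ d ih =>
        obtain ⟨N, hN⟩ := ih
        rcases Nat.lt_or_ge d m with hd | hd
        · have heq : m - d = (m - (d + 1)) + 1 := by omega
          refine ⟨N + c, ?_⟩
          intro x hx
          have := key_step (m - (d+1)) N (heq ▸ hN) c
          apply this
          refine ⟨hx, ?_⟩
          rw [hc]
          trivial
        · have heq : m - (d + 1) = m - d := by omega
          exact ⟨N, heq ▸ hN⟩
    obtain ⟨N, hN⟩ := main m
    rw [Nat.sub_self] at hN
    refine ⟨N, ?_⟩
    apply Set.eq_univ_of_univ_subset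
    intro x _
    exact hN (Subgroup.mem_top x)


end SB
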